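/- Let y = (y_1,…,y_n) be a list of n positive integers, let y_{n+1} be a positive integer, and let z = (y_1,…,y_n,y_{n+1}). If y is minimally invariant, then every nondecreasing invariant parking assortment x for z is of the form x = (1,1,…,1,w) (n ones followed by a single entry w) for some positive integer w. -/

import Mathlib

open Classical in
/-- One car attempts to park on a one-way street with spots `1, …, m`: given the set
`occ` of occupied spots, the car with preference `p` and length `l` parks in spots
`j, j+1, …, j+l-1` for the least `j ≥ p` such that these spots all exist (are `≤ m`)
and are unoccupied; returns the new set of occupied spots, or `none` if parking fails. -/
noncomputable def parkOne (m : ℕ) (occ : Finset ℕ) (p l : ℕ) : Option (Finset ℕ) :=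
  if h : ∃ j, p ≤ j ∧ j + l ≤ m + 1 ∧ ∀ k ∈ Finset.Ico j (j + l), k ∉ occ then
    some (occ ∪ Finset.Ico (Nat.find h) (Nat.find h + l))
  else none

/-- Run the parking-assortment process for the cars `(preference, length)` in order. -/
noncomputable def parkList (m : ℕ) : List (ℕ × ℕ) → Finset ℕ → Option (Finset ℕ)
  | [], occ => some occ
  | c :: rest, occ => (parkOne m occ c.1 c.2).bind (parkList m rest)

/-- `x` is a parking assortment for the list of car lengths `y`. -/
def IsPA (y x : List ℕ) : Prop :=
  x.length = y.length ∧ (∀ a ∈ x, 1 ≤ a ∧ a ≤ y.sum) ∧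
    (parkList y.sum (x.zip y) ∅).isSome

/-- `PA y` is the set of parking assortments for `y`. -/
def PA (y : List ℕ) : Set (List ℕ) := {x | IsPA y x}

/-- `PAinv y` is the set of (permutation-)invariant parking assortments for `y`:
those preference lists all of whose rearrangements are parking assortments for `y`. -/
def PAinv (y : List ℕ) : Set (List ℕ) := {x | ∀ x', x'.Perm x → IsPA y x'}

/-- `y` is minimally invariant if the all-ones list is the only invariant
parking assortment for `y`. -/
def MinInv (y : List ℕ) : Prop := PAinv y = {List.replicate y.length 1}

/-
Write the sorted invariant assortment as `x = u ++ [w]`, so every entry of `u` is `≤ w`. The last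
car parks in a block starting at some `t ≥ w`, and when the first `n` cars have parked the spot `t`
is still free. A car whose preference is at most `t` and which finds every spot `≥ t` free cannot
park across or beyond `t`, since it could have parked at `t` itself. Hence the first `n` cars all
park in spots `< t ≤ m + 1`, i.e. their run is the same on the street of length `m = y.sum`, and
`u` is a parking assortment for `y`. Applying this to every rearrangement of `u` (followed by `w`)
shows `u ∈ PAinv y`, so `u` is all ones by minimal invariance.
-/

open Finset

def FitsAt (m : ℕ) (occ : Finset ℕ) (p l t : ℕ) : Prop :=
  p ≤ t ∧ t + l ≤ m + 1 ∧ ∀ k ∈ Ico t (t + l), k ∉ occ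

lemma parkOne_eq_some_iff {m p l : ℕ} {occ occ' : Finset ℕ} :
    parkOne m occ p l = some occ' ↔
      ∃ t, FitsAt m occ p l t ∧ (∀ t' < t, ¬ FitsAt m occ p l t') ∧
        occ' = occ ∪ Ico t (t + l) := by
  unfold parkOne
  split
  · next hex =>
    refine ⟨fun h => ⟨Nat.find hex, Nat.find_spec hex, fun t' => Nat.find_min hex,
      (Option.some_inj.mp h).symm⟩, ?_⟩
    rintro ⟨t, hfit, hmin, rfl⟩
    have : Nat.find hex = t :=
      le_antisymm (Nat.find_min' hex hfit) (not_lt.mp fun hlt => hmin _ hlt (Nat.find_spec hex))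
    rw [this]
  · next hex =>
    simp only [reduceCtorEq, false_iff]
    rintro ⟨t, hfit, -⟩
    exact hex ⟨t, hfit⟩

lemma parkList_append (m : ℕ) (a b : List (ℕ × ℕ)) (occ : Finset ℕ) :
    parkList m (a ++ b) occ = (parkList m a occ).bind (parkList m b) := by
  induction a generalizing occ with
  | nil => simp [parkList]
  | cons c rest ih =>
    simp only [List.cons_append, parkList, Option.bind_assoc]
    exact congrArg _ (funext ih)

lemma subset_of_parkList_eq_some {m : ℕ} {cars : List (ℕ × ℕ)} {occ F : Finset ℕ}
    (h : parkList m cars occ = some F) : occ ⊆ F := by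
  induction cars generalizing occ with
  | nil => simp_all [parkList]
  | cons c rest ih =>
    obtain ⟨occ₁, h₁, h₂⟩ := Option.bind_eq_some_iff.mp h
    obtain ⟨t, -, -, rfl⟩ := parkOne_eq_some_iff.mp h₁
    exact subset_union_left.trans (ih h₂)

-- Otherwise the block starting at `j` fits and lies before `t`.
lemma add_le_of_fitsAt_of_forall_lt {M occ p l t j} (hfit : FitsAt M occ p l t)
    (hmin : ∀ t' < t, ¬ FitsAt M occ p l t') (hpj : p ≤ j) (hocc : ∀ k ∈ occ, k < j)
    (hj : j ∉ Ico t (t + l)) : t + l ≤ j := by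
  by_contra! hlt
  have hjt : j < t := by
    by_contra! hle
    exact hj (mem_Ico.mpr ⟨hle, hlt⟩)
  refine hmin j hjt ⟨hpj, by linarith [hfit.2.1], fun k hk hkocc => ?_⟩
  linarith [hocc k hkocc, (mem_Ico.mp hk).1]

lemma parkOne_eq_of_le {m M occ p l t} (hfit : FitsAt M occ p l t)
    (hmin : ∀ t' < t, ¬ FitsAt M occ p l t') (ht : t + l ≤ m + 1) (hmM : m ≤ M) :
    parkOne m occ p l = parkOne M occ p l := by
  rw [parkOne_eq_some_iff.mpr ⟨t, hfit, hmin, rfl⟩, parkOne_eq_some_iff]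
  exact ⟨t, ⟨hfit.1, ht, hfit.2.2⟩, fun t' ht' hfit' =>
    hmin t' ht' ⟨hfit'.1, hfit'.2.1.trans (by omega), hfit'.2.2⟩, rfl⟩

lemma parkList_eq_of_not_mem {m M j : ℕ} (hjm : j ≤ m + 1) (hmM : m ≤ M)
    {cars : List (ℕ × ℕ)} {occ F : Finset ℕ} (h : parkList M cars occ = some F) (hjF : j ∉ F)
    (hpref : ∀ c ∈ cars, c.1 ≤ j) (hocc : ∀ k ∈ occ, k < j) :
    parkList m cars occ = some F ∧ ∀ c ∈ cars, c.1 + c.2 ≤ j := by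
  induction cars generalizing occ with
  | nil => exact ⟨h, by simp⟩
  | cons c rest ih =>
    obtain ⟨occ₁, h₁, h₂⟩ := Option.bind_eq_some_iff.mp h
    obtain ⟨t, hfit, hmin, rfl⟩ := parkOne_eq_some_iff.mp h₁
    have hcar : t + c.2 ≤ j :=
      add_le_of_fitsAt_of_forall_lt hfit hmin (hpref c List.mem_cons_self) hocc fun hj =>
        hjF (subset_of_parkList_eq_some h₂ (mem_union_right _ hj))
    have hocc₁ : ∀ k ∈ occ ∪ Ico t (t + c.2), k < j := by
      intro k hk
      rcases mem_union.mp hk with hk | hk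
      · exact hocc k hk
      · linarith [(mem_Ico.mp hk).2]
    obtain ⟨hrest, hprefs⟩ :=
      ih h₂ (fun d hd => hpref d (List.mem_cons_of_mem _ hd)) hocc₁
    refine ⟨?_, ?_⟩
    · rw [parkList, parkOne_eq_of_le hfit hmin (by omega) hmM, h₁]
      exact hrest
    · rintro d (_ | ⟨_, hd⟩)
      · linarith [hfit.1]
      · exact hprefs d hd

lemma isPA_of_isPA_append {y u : List ℕ} {yn1 w : ℕ} (hy : ∀ a ∈ y, 0 < a) (hyn1 : 0 < yn1)
    (hlen : u.length = y.length) (hw : ∀ a ∈ u, a ≤ w)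
    (hpa : IsPA (y ++ [yn1]) (u ++ [w])) : IsPA y u := by
  obtain ⟨-, hbd, hrun⟩ := hpa
  simp only [List.sum_append, List.sum_singleton] at hbd hrun
  rw [List.zip_append hlen, Option.isSome_iff_exists] at hrun
  obtain ⟨T, hT⟩ := hrun
  obtain ⟨F, hF, hlast⟩ := Option.bind_eq_some_iff.mp (parkList_append _ _ _ _ ▸ hT)
  obtain ⟨T', hT', -⟩ := Option.bind_eq_some_iff.mp hlast
  obtain ⟨t, hfit, -, rfl⟩ := parkOne_eq_some_iff.mp hT'
  have htF : t ∉ F := hfit.2.2 t (mem_Ico.mpr ⟨le_rfl, by omega⟩)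
  obtain ⟨hshort, hprefs⟩ :=
    parkList_eq_of_not_mem (j := t) (m := y.sum) (by linarith [hfit.2.1]) (by omega) hF htF
      (fun c hc => (hw _ (List.of_mem_zip hc).1).trans hfit.1) (by simp)
  refine ⟨hlen, fun a ha => ⟨(hbd a (List.mem_append_left _ ha)).1, ?_⟩, by simp [hshort]⟩
  obtain ⟨b, hab⟩ : ∃ b, (a, b) ∈ u.zip y := by
    rw [← List.map_fst_zip hlen.le, List.mem_map] at ha
    obtain ⟨c, hc, rfl⟩ := ha
    exact ⟨c.2, hc⟩
  have := hprefs _ hab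
  have := hy b (List.of_mem_zip hab).2
  linarith [hfit.2.1]

lemma mem_PAinv_of_append_mem_PAinv {y u : List ℕ} {yn1 w : ℕ} (hy : ∀ a ∈ y, 0 < a)
    (hyn1 : 0 < yn1) (hlen : u.length = y.length) (hw : ∀ a ∈ u, a ≤ w)
    (hinv : u ++ [w] ∈ PAinv (y ++ [yn1])) : u ∈ PAinv y := fun _ hperm =>
  isPA_of_isPA_append hy hyn1 (hperm.length_eq.trans hlen) (fun a ha => hw a (hperm.mem_iff.mp ha))
    (hinv _ (hperm.append_right [w]))

theorem stmt7_general (y : List ℕ) (hy : ∀ a ∈ y, 0 < a)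
    (hmin : MinInv y) (yn1 : ℕ) (hyn1 : 0 < yn1)
    (x : List ℕ) (hx : x ∈ PAinv (y ++ [yn1])) (hsort : x.Pairwise (· ≤ ·)) :
    ∃ w, 0 < w ∧ x = List.replicate y.length 1 ++ [w] := by
  obtain ⟨hxlen, hxbd, -⟩ := hx x (List.Perm.refl x)
  obtain rfl | ⟨u, w, rfl⟩ := x.eq_nil_or_concat'
  · simp at hxlen
  have hlen : u.length = y.length := by simpa using hxlen
  have hw : ∀ a ∈ u, a ≤ w := fun a ha =>
    (List.pairwise_append.mp hsort).2.2 a ha w (List.mem_singleton_self w)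
  have hu : u ∈ PAinv y := mem_PAinv_of_append_mem_PAinv hy hyn1 hlen hw hx
  rw [hmin, Set.mem_singleton_iff] at hu
  exact ⟨w, (hxbd w (by simp)).1, by rw [hu]⟩

theorem stmt7 (y : List ℕ) (hy : ∀ a ∈ y, 0 < a) (hne : y ≠ [])
    (hmin : MinInv y) (yn1 : ℕ) (hyn1 : 0 < yn1)
    (x : List ℕ) (hx : x ∈ PAinv (y ++ [yn1])) (hsort : x.Pairwise (· ≤ ·)) :
    ∃ w, 0 < w ∧ x = List.replicate y.length 1 ++ [w] :=
  stmt7_general y hy hmin yn1 hyn1 x hx hsort
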